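/- arXiv:0801.2513 — 4 statements merged into one kernel-verified Lean document; each statement's English description precedes it below -/
import Mathlib

section
/- Let (L,·) and (G,∘) be quasigroups and (U,V,W) an isotopism from L to G (bijections U,V,W : L → G with xU ∘ yV = (x·y)W for all x,y in L). If L' is a subquasigroup of L such that U, V, W all map L' onto a subset G' of G, then G' is a subquasigroup of G. In particular, an isotope of a Smarandache quasigroup under a Smarandache isotopism is a Smarandache quasigroup. -/
/-- A subquasigroup: a nonempty subset closed under multiplication and
under the left and right division operations. -/
def IsSubquasigroup {L : Type*} (mul : L → L → L) (S : Set L) : Prop :=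
  S.Nonempty ∧ (∀ a ∈ S, ∀ b ∈ S, mul a b ∈ S) ∧
    (∀ a ∈ S, ∀ b ∈ S, ∀ x : L, mul a x = b → x ∈ S) ∧
    (∀ a ∈ S, ∀ b ∈ S, ∀ y : L, mul y a = b → y ∈ S)

/-- If `(U,V,W)` is an isotopism of quasigroups `(L,·) → (G,∘)` and `L'` is a
subquasigroup of `L` mapped by each of `U, V, W` onto `G' ⊆ G`, then `G'` is
a subquasigroup of `G`. In particular, an isotope of a Smarandache quasigroup
under a Smarandache isotopism is a Smarandache quasigroup. -/
theorem sisotope_of_subquasigroup_is_subquasigroup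
    {L G : Type*} (mulL : L → L → L) (mulG : G → G → G)
    (hLl : ∀ a : L, Function.Bijective (fun x => mulL a x))
    (hLr : ∀ a : L, Function.Bijective (fun x => mulL x a))
    (hGl : ∀ a : G, Function.Bijective (fun x => mulG a x))
    (hGr : ∀ a : G, Function.Bijective (fun x => mulG x a))
    (U V W : L → G)
    (hU : Function.Bijective U) (hV : Function.Bijective V)
    (hW : Function.Bijective W)
    (hiso : ∀ x y : L, mulG (U x) (V y) = W (mulL x y))
    (L' : Set L) (hL' : IsSubquasigroup mulL L')
    (G' : Set G) (hUo : U '' L' = G') (hVo : V '' L' = G') (hWo : W '' L' = G') :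
    IsSubquasigroup mulG G' := by
  obtain ⟨⟨e, he⟩, hmul, hldiv, hrdiv⟩ := hL'
  refine ⟨⟨U e, hUo ▸ ⟨e, he, rfl⟩⟩, ?_, ?_, ?_⟩
  · rintro a ha b hb
    obtain ⟨x, hx, rfl⟩ : a ∈ U '' L' := hUo ▸ ha
    obtain ⟨y, hy, rfl⟩ : b ∈ V '' L' := hVo ▸ hb
    rw [hiso]
    exact hWo ▸ ⟨mulL x y, hmul x hx y hy, rfl⟩
  · rintro a ha b hb x hx
    obtain ⟨p, hp, rfl⟩ : a ∈ U '' L' := hUo ▸ ha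
    obtain ⟨r, hr, rfl⟩ : b ∈ W '' L' := hWo ▸ hb
    obtain ⟨q, rfl⟩ := hV.2 x
    rw [hiso] at hx
    exact hVo ▸ ⟨q, hldiv p hp r hr q (hW.1 hx), rfl⟩
  · rintro a ha b hb y hy
    obtain ⟨p, hp, rfl⟩ : a ∈ V '' L' := hVo ▸ ha
    obtain ⟨r, hr, rfl⟩ : b ∈ W '' L' := hWo ▸ hb
    obtain ⟨q, rfl⟩ := hU.2 y
    rw [hiso] at hy
    exact hUo ▸ ⟨q, hrdiv p hp r hr q (hW.1 hy), rfl⟩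
end

section
/- Let (L,·) be a Smarandache loop with S-subgroup (L',·) and let SAUM(L) = {α ∈ AUM(L) : α(L') = L'}. Define on H_S = SAUM(L) × L the operation (α,x) ∘ (β,y) = (αβ, (xβ)·y). Then (H_S,∘) is a loop, and H' = SAUM(L) × L' is a subloop of H_S closed under ∘ which is a group; hence H_S is a Smarandache loop. -/
/-- A Smarandache automorphism of `(L, mul)` relative to the S-subgroup `L'`:
an automorphism of `L` mapping `L'` onto `L'`. -/
def IsSAut {L : Type*} (mul : L → L → L) (L' : Set L) (φ : Equiv.Perm L) : Prop :=
  (∀ x y : L, φ (mul x y) = mul (φ x) (φ y)) ∧ φ '' L' = L'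

/-- The Smarandache holomorph multiplication `(α,x) ∘ (β,y) = (αβ, (xβ)·y)`
on `SAUM(L) × L`, with automorphisms composed so that `x(αβ) = (xα)β`. -/
def sHolMul {L : Type*} (mul : L → L → L) (L' : Set L) :
    ({φ : Equiv.Perm L // IsSAut mul L' φ} × L) →
      ({φ : Equiv.Perm L // IsSAut mul L' φ} × L) →
      ({φ : Equiv.Perm L // IsSAut mul L' φ} × L) :=
  fun p q =>
    (⟨p.1.1.trans q.1.1,
      ⟨fun x y => by simp only [Equiv.trans_apply]; rw [p.1.2.1, q.1.2.1],
       by rw [Equiv.coe_trans, Set.image_comp, p.1.2.2, q.1.2.2]⟩⟩,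
      mul (q.1.1 p.2) q.2)

/-- The Smarandache holomorph `H_S = SAUM(L) × L` of a Smarandache loop `(L,·)`
with S-subgroup `L'` is a loop, and `H' = SAUM(L) × L'` is a subloop closed
under `∘` that is a group; hence `H_S` is a Smarandache loop. -/
theorem smarandache_holomorph_is_smarandache_loop {L : Type*}
    (mul : L → L → L) (e : L)
    (hid : ∀ x : L, mul e x = x ∧ mul x e = x)
    (hleft : ∀ a : L, Function.Bijective (fun x => mul a x))
    (hright : ∀ a : L, Function.Bijective (fun x => mul x a))
    (L' : Set L) (hne : L'.Nonempty)
    (hclosed : ∀ a ∈ L', ∀ b ∈ L', mul a b ∈ L')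
    (hassoc : ∀ a ∈ L', ∀ b ∈ L', ∀ c ∈ L',
      mul (mul a b) c = mul a (mul b c))
    (hidL' : e ∈ L')
    (hinv : ∀ a ∈ L', ∃ b ∈ L', mul a b = e ∧ mul b a = e) :
    -- `H_S` is a loop with identity `(id, e)`:
    (∀ h, sHolMul mul L' (⟨Equiv.refl L, fun _ _ => rfl, Set.image_id L'⟩, e) h = h ∧
        sHolMul mul L' h (⟨Equiv.refl L, fun _ _ => rfl, Set.image_id L'⟩, e) = h) ∧
    (∀ a, Function.Bijective (fun h => sHolMul mul L' a h)) ∧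
    (∀ a, Function.Bijective (fun h => sHolMul mul L' h a)) ∧
    -- `H' = SAUM(L) × L'` is closed under `∘` and forms a group:
    (∀ p q : {φ : Equiv.Perm L // IsSAut mul L' φ} × L, p.2 ∈ L' → q.2 ∈ L' →
      (sHolMul mul L' p q).2 ∈ L') ∧
    (∀ p q r : {φ : Equiv.Perm L // IsSAut mul L' φ} × L,
      p.2 ∈ L' → q.2 ∈ L' → r.2 ∈ L' →
      sHolMul mul L' (sHolMul mul L' p q) r = sHolMul mul L' p (sHolMul mul L' q r)) ∧
    (∀ p : {φ : Equiv.Perm L // IsSAut mul L' φ} × L, p.2 ∈ L' →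
      ∃ q : {φ : Equiv.Perm L // IsSAut mul L' φ} × L, q.2 ∈ L' ∧
        sHolMul mul L' p q = (⟨Equiv.refl L, fun _ _ => rfl, Set.image_id L'⟩, e) ∧
        sHolMul mul L' q p = (⟨Equiv.refl L, fun _ _ => rfl, Set.image_id L'⟩, e)) := by
  -- every S-automorphism fixes `e`
  have hfix : ∀ φ : Equiv.Perm L, (∀ x y, φ (mul x y) = mul (φ x) (φ y)) → φ e = e := by
    intro φ hφ
    have h1 : φ (mul e e) = mul (φ e) (φ e) := hφ e e
    rw [(hid e).1] at h1
    apply (hleft (φ e)).1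
    show mul (φ e) (φ e) = mul (φ e) e
    rw [← h1, (hid (φ e)).2]
  have hmem : ∀ φ : Equiv.Perm L, φ '' L' = L' → ∀ x ∈ L', φ x ∈ L' := by
    intro φ h x hx
    rw [← h]; exact ⟨x, hx, rfl⟩
  have hmemsymm : ∀ φ : Equiv.Perm L, φ '' L' = L' → ∀ x ∈ L', φ.symm x ∈ L' := by
    intro φ h x hx
    rw [← h] at hx
    obtain ⟨w, hw, rfl⟩ := hx
    rwa [Equiv.symm_apply_apply]
  have hsymm : ∀ φ : Equiv.Perm L, IsSAut mul L' φ → IsSAut mul L' φ.symm := by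
    intro φ ⟨h1, h2⟩
    refine ⟨fun x y => ?_, ?_⟩
    · apply φ.injective
      rw [h1, Equiv.apply_symm_apply, Equiv.apply_symm_apply, Equiv.apply_symm_apply]
    · ext z
      constructor
      · rintro ⟨w, hw, rfl⟩
        exact hmemsymm φ h2 w hw
      · intro hz
        exact ⟨φ z, hmem φ h2 z hz, Equiv.symm_apply_apply φ z⟩
  have htrans : ∀ φ ψ : Equiv.Perm L, IsSAut mul L' φ → IsSAut mul L' ψ →
      IsSAut mul L' (φ.trans ψ) := by
    intro φ ψ hφ hψ
    refine ⟨fun x y => ?_, ?_⟩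
    · simp only [Equiv.trans_apply]; rw [hφ.1, hψ.1]
    · rw [Equiv.coe_trans, Set.image_comp, hφ.2, hψ.2]
  refine ⟨?_, ?_, ?_, ?_, ?_, ?_⟩
  · -- identity
    intro h
    constructor
    · show (⟨⟨(Equiv.refl L).trans h.1.1, _⟩, mul (h.1.1 e) h.2⟩ :
        {φ : Equiv.Perm L // IsSAut mul L' φ} × L) = h
      have he : h.1.1 e = e := hfix h.1.1 h.1.2.1
      refine Prod.ext (Subtype.ext ?_) ?_ <;> simp [he, (hid h.2).1]
    · show (⟨⟨h.1.1.trans (Equiv.refl L), _⟩, mul ((Equiv.refl L) h.2) e⟩ :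
        {φ : Equiv.Perm L // IsSAut mul L' φ} × L) = h
      refine Prod.ext (Subtype.ext ?_) ?_ <;> simp [(hid h.2).2]
  · -- left translations bijective
    intro a
    constructor
    · intro h1 h2 heq
      simp only [sHolMul] at heq
      have e1 : a.1.1.trans h1.1.1 = a.1.1.trans h2.1.1 := congrArg (Subtype.val ∘ Prod.fst) heq
      have e1' : h1.1.1 = h2.1.1 := by
        ext x
        have := congrFun (congrArg (fun E : Equiv.Perm L => (E : L → L)) e1) (a.1.1.symm x)
        simpa using this
      have e2 : mul (h1.1.1 a.2) h1.2 = mul (h2.1.1 a.2) h2.2 := congrArg Prod.snd heq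
      rw [e1'] at e2
      have e2' : h1.2 = h2.2 := (hleft (h2.1.1 a.2)).1 e2
      exact Prod.ext (Subtype.ext e1') e2'
    · intro q
      set φ : Equiv.Perm L := a.1.1.symm.trans q.1.1 with hφdef
      have hφ : IsSAut mul L' φ := htrans _ _ (hsymm _ a.1.2) q.1.2
      obtain ⟨z, hz⟩ := (hleft (φ a.2)).2 q.2
      refine ⟨⟨⟨φ, hφ⟩, z⟩, ?_⟩
      show (⟨⟨a.1.1.trans φ, _⟩, mul (φ a.2) z⟩ :
        {φ : Equiv.Perm L // IsSAut mul L' φ} × L) = q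
      refine Prod.ext (Subtype.ext ?_) ?_
      · ext x; simp [hφdef]
      · exact hz
  · -- right translations bijective
    intro a
    constructor
    · intro h1 h2 heq
      simp only [sHolMul] at heq
      have e1 : h1.1.1.trans a.1.1 = h2.1.1.trans a.1.1 := congrArg (Subtype.val ∘ Prod.fst) heq
      have e1' : h1.1.1 = h2.1.1 := by
        ext x
        have := congrFun (congrArg (fun E : Equiv.Perm L => (E : L → L)) e1) x
        simp only [Equiv.coe_trans, Function.comp_apply] at this
        exact a.1.1.injective this
      have e2 : mul (a.1.1 h1.2) a.2 = mul (a.1.1 h2.2) a.2 := congrArg Prod.snd heq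
      have e2' : a.1.1 h1.2 = a.1.1 h2.2 := (hright a.2).1 e2
      exact Prod.ext (Subtype.ext e1') (a.1.1.injective e2')
    · intro q
      set φ : Equiv.Perm L := q.1.1.trans a.1.1.symm with hφdef
      have hφ : IsSAut mul L' φ := htrans _ _ q.1.2 (hsymm _ a.1.2)
      obtain ⟨w, hw⟩ := (hright a.2).2 q.2
      refine ⟨⟨⟨φ, hφ⟩, a.1.1.symm w⟩, ?_⟩
      show (⟨⟨φ.trans a.1.1, _⟩, mul (a.1.1 (a.1.1.symm w)) a.2⟩ :
        {φ : Equiv.Perm L // IsSAut mul L' φ} × L) = q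
      refine Prod.ext (Subtype.ext ?_) ?_
      · ext x; simp [hφdef]
      · rw [Equiv.apply_symm_apply]; exact hw
  · -- closure of H'
    intro p q hp hq
    exact hclosed _ (hmem q.1.1 q.1.2.2 p.2 hp) _ hq
  · -- associativity on H'
    intro p q r hp hq hr
    refine Prod.ext (Subtype.ext ?_) ?_
    · simp [sHolMul, Equiv.trans_assoc]
    · show mul (r.1.1 (mul (q.1.1 p.2) q.2)) r.2 =
        mul ((q.1.1.trans r.1.1) p.2) (mul (r.1.1 q.2) r.2)
      rw [r.1.2.1, Equiv.trans_apply]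
      exact hassoc _ (hmem r.1.1 r.1.2.2 _ (hmem q.1.1 q.1.2.2 _ hp))
        _ (hmem r.1.1 r.1.2.2 _ hq) _ hr
  · -- inverses in H'
    intro p hp
    have hx' : p.1.1.symm p.2 ∈ L' := hmemsymm p.1.1 p.1.2.2 p.2 hp
    obtain ⟨b, hb, hb1, hb2⟩ := hinv _ hx'
    refine ⟨⟨⟨p.1.1.symm, hsymm _ p.1.2⟩, b⟩, hb, ?_, ?_⟩
    · show (⟨⟨p.1.1.trans p.1.1.symm, _⟩, mul (p.1.1.symm p.2) b⟩ :
        {φ : Equiv.Perm L // IsSAut mul L' φ} × L) = _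
      refine Prod.ext (Subtype.ext ?_) ?_
      · ext x; simp
      · exact hb1
    · show (⟨⟨p.1.1.symm.trans p.1.1, _⟩, mul (p.1.1 b) p.2⟩ :
        {φ : Equiv.Perm L // IsSAut mul L' φ} × L) = _
      refine Prod.ext (Subtype.ext ?_) ?_
      · ext x; simp
      · have : mul (p.1.1 b) (p.1.1 (p.1.1.symm p.2)) = p.1.1 e := by
          rw [← p.1.2.1, hb2]
        rw [Equiv.apply_symm_apply, hfix p.1.1 p.1.2.1] at this
        exact this
end

section
/- Let U = (L,⊕) and V = (L,⊗) be quasigroups on the same underlying set, ψ a bijection of L, and β an automorphism of U. Set δ = ψ⁻¹αβψ and γ = ψ⁻¹βψ for some automorphism α of U, and define φ : AUM(U) × L → AUM(V) × L by (α,x)φ = (ψ⁻¹αψ, xψ⁻¹αψ), assuming ψ⁻¹AUM(U)ψ = AUM(V). Then φ is an isomorphism of the holomorph of U onto the holomorph of V if and only if (xδ) ⊗ (yγ) = (x β ⊕ y) δ holds for all x,y in L, for all β ∈ AUM(U) deriving γ = ψ⁻¹βψ and δ = ψ⁻¹αβψ with α ∈ AUM(U). -/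
/-- `φ` is an automorphism of the magma `(L, mul)`. -/
def IsMagmaAut {L : Type*} (mul : L → L → L) (φ : Equiv.Perm L) : Prop :=
  ∀ x y : L, φ (mul x y) = mul (φ x) (φ y)

/-- The holomorph multiplication `(α,x) ∘ (β,y) = (αβ, (xβ)·y)` on
`AUM(L) × L`, with automorphisms composed so that `x(αβ) = (xα)β`. -/
def holMul {L : Type*} (mul : L → L → L) :
    ({φ : Equiv.Perm L // IsMagmaAut mul φ} × L) →
      ({φ : Equiv.Perm L // IsMagmaAut mul φ} × L) →
      ({φ : Equiv.Perm L // IsMagmaAut mul φ} × L) :=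
  fun p q =>
    (⟨p.1.1.trans q.1.1, fun x y => by
        simp only [Equiv.trans_apply]; rw [p.1.2, q.1.2]⟩,
      mul (q.1.1 p.2) q.2)

/-- Right-action conjugation `ψ⁻¹αψ : x ↦ ψ (α (ψ⁻¹ x))`. -/
def conjPerm {L : Type*} (ψ α : Equiv.Perm L) : Equiv.Perm L :=
  (ψ.symm.trans α).trans ψ


lemma conjPerm_trans {L : Type*} (ψ α β : Equiv.Perm L) :
    (conjPerm ψ α).trans (conjPerm ψ β) = conjPerm ψ (α.trans β) := by
  ext x; simp [conjPerm]

lemma conjPerm_conjPerm_symm {L : Type*} (ψ γ : Equiv.Perm L) :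
    conjPerm ψ (conjPerm ψ.symm γ) = γ := by
  ext x; simp [conjPerm]

lemma conjPerm_symm_conjPerm {L : Type*} (ψ γ : Equiv.Perm L) :
    conjPerm ψ.symm (conjPerm ψ γ) = γ := by
  ext x; simp [conjPerm]

/-- Let `U = (L,⊕)` and `V = (L,⊗)` be quasigroups on the same set, `ψ` a
bijection of `L` conjugating `AUM(U)` onto `AUM(V)`.  The map
`φ : (α,x) ↦ (ψ⁻¹αψ, xψ⁻¹αψ)` is an isomorphism of the holomorph of `U` onto
the holomorph of `V` if and only if `(xδ) ⊗ (yγ) = ((xβ) ⊕ y)δ` for all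
`x, y ∈ L` and all `α, β ∈ AUM(U)`, where `δ = ψ⁻¹αβψ` and `γ = ψ⁻¹βψ`. -/
theorem holomorph_isomorphism_iff {L : Type*} (op1 op2 : L → L → L)
    (h1l : ∀ a : L, Function.Bijective (fun x => op1 a x))
    (h1r : ∀ a : L, Function.Bijective (fun x => op1 x a))
    (h2l : ∀ a : L, Function.Bijective (fun x => op2 a x))
    (h2r : ∀ a : L, Function.Bijective (fun x => op2 x a))
    (ψ : Equiv.Perm L)
    (hconj : ∀ α : Equiv.Perm L, IsMagmaAut op1 α ↔ IsMagmaAut op2 (conjPerm ψ α))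
    (φ : ({α : Equiv.Perm L // IsMagmaAut op1 α} × L) →
         ({α : Equiv.Perm L // IsMagmaAut op2 α} × L))
    (hφ : ∀ p, φ p = (⟨conjPerm ψ p.1.1, (hconj p.1.1).mp p.1.2⟩,
        conjPerm ψ p.1.1 p.2)) :
    (Function.Bijective φ ∧ ∀ p q, φ (holMul op1 p q) = holMul op2 (φ p) (φ q)) ↔
      (∀ α β : Equiv.Perm L, IsMagmaAut op1 α → IsMagmaAut op1 β → ∀ x y : L,
        op2 (conjPerm ψ (α.trans β) x) (conjPerm ψ β y) =
          conjPerm ψ (α.trans β) (op1 (β x) y)) := by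
  constructor
  · rintro ⟨-, hhom⟩ α β hα hβ x y
    have h := congrArg Prod.snd (hhom (⟨α, hα⟩, x) (⟨β, hβ⟩, y))
    simp only [hφ, holMul] at h
    simpa [conjPerm] using h.symm
  · intro hcond
    have haut : ∀ γ : Equiv.Perm L, IsMagmaAut op2 γ →
        IsMagmaAut op1 (conjPerm ψ.symm γ) := by
      intro γ hγ
      apply (hconj (conjPerm ψ.symm γ)).mpr
      rwa [conjPerm_conjPerm_symm]
    refine ⟨Function.bijective_iff_has_inverse.mpr
      ⟨fun q => (⟨conjPerm ψ.symm q.1.1, haut _ q.1.2⟩, q.1.1.symm q.2), ?_, ?_⟩, ?_⟩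
    · intro p
      simp only [hφ]
      refine Prod.ext (Subtype.ext ?_) ?_
      · exact conjPerm_symm_conjPerm ψ p.1.1
      · simp
    · intro q
      simp only [hφ]
      refine Prod.ext (Subtype.ext ?_) ?_
      · exact conjPerm_conjPerm_symm ψ q.1.1
      · simp [conjPerm_conjPerm_symm]
    · intro p q
      simp only [hφ, holMul]
      refine Prod.ext (Subtype.ext ?_) ?_
      · exact (conjPerm_trans ψ p.1.1 q.1.1).symm
      · have := hcond p.1.1 q.1.1 p.1.2 q.1.2 p.2 q.2
        simpa [conjPerm] using this.symm
end

section
/- Let U = (L,⊕) be a loop with identity e and V = (L,⊗) a quasigroup on the same set. Suppose bijections δ, γ of L and β ∈ AUM(U) satisfy (xδ) ⊗ (yγ) = ((xβ) ⊕ y)δ for all x,y ∈ L. Then δ ∘ 𝓡_{eγ} = β ∘ δ, where 𝓡_{eγ} is the right translation x ↦ x ⊗ (eγ) in V. Consequently, if δ ∈ AUM(V), then β ∈ AUM(V) if and only if 𝓡_{eγ} ∈ AUM(V). -/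
/-- Let `U = (L,⊕)` be a loop with identity `e` and `V = (L,⊗)` a quasigroup
on the same set, with bijections `δ, γ` and `β ∈ AUM(U)` satisfying
`(xδ) ⊗ (yγ) = ((xβ) ⊕ y)δ`.  Then `δ ∘ 𝓡_{eγ} = β ∘ δ` (right action), i.e.
`(xδ) ⊗ (eγ) = (xβ)δ` for all `x`; consequently, if `δ ∈ AUM(V)`, then
`β ∈ AUM(V)` iff the right translation `𝓡_{eγ} : x ↦ x ⊗ (eγ)` is an
automorphism of `V`. -/
theorem right_translation_of_identity_image {L : Type*} (op1 op2 : L → L → L)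
    (e : L) (hid : ∀ x : L, op1 e x = x ∧ op1 x e = x)
    (h1l : ∀ a : L, Function.Bijective (fun x => op1 a x))
    (h1r : ∀ a : L, Function.Bijective (fun x => op1 x a))
    (h2l : ∀ a : L, Function.Bijective (fun x => op2 a x))
    (h2r : ∀ a : L, Function.Bijective (fun x => op2 x a))
    (δ γ β : Equiv.Perm L) (hβ : IsMagmaAut op1 β)
    (hcond : ∀ x y : L, op2 (δ x) (γ y) = δ (op1 (β x) y)) :
    (∀ x : L, op2 (δ x) (γ e) = δ (β x)) ∧
      (IsMagmaAut op2 δ →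
        (IsMagmaAut op2 β ↔
          ∀ x y : L, op2 (op2 x y) (γ e) =
            op2 (op2 x (γ e)) (op2 y (γ e)))) := by
  have key : ∀ x : L, op2 (δ x) (γ e) = δ (β x) := fun x => by
    rw [hcond x e, (hid (β x)).2]
  have key' : ∀ z : L, op2 z (γ e) = δ (β (δ.symm z)) := fun z => by
    have := key (δ.symm z); rwa [Equiv.apply_symm_apply] at this
  refine ⟨key, fun hδ => ⟨fun hβ2 x y => ?_, fun hR x y => δ.injective ?_⟩⟩
  · have hδ' : δ.symm (op2 x y) = op2 (δ.symm x) (δ.symm y) := by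
      apply δ.injective
      rw [Equiv.apply_symm_apply, hδ, Equiv.apply_symm_apply, Equiv.apply_symm_apply]
    rw [key' (op2 x y), key' x, key' y, hδ', hβ2, hδ]
  · rw [hδ (β x) (β y), ← key, ← key, ← key, hδ, hR]
end
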